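/- Let π be a play in the expanded game G' from (s_init, 0) with MPsup(π) ≤ t, and let (γ_i)_{i≥0} be its configuration sequence with γ_i = (s_i, c_i). Then there exist 1 ≤ i ≤ j such that the infix π_{[i,j]} is a good cycle, i.e., γ_{i−1} = γ_j, c_{i−1} ≤ t, and (1/(j−i+1)) Σ_{k=i}^{j} c_k ≤ t. -/

import Mathlib

namespace AvgEnergy

/-- An integer-weighted edge over a state space `α`. -/
abbrev WEdge (α : Type*) : Type _ := α × ℤ × α

/-- A finite turn-based weighted game `G = (S₀, S₁, E)`:
`S₀` and `S₁` are disjoint sets of states covering `S`, edges carry integer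
weights bounded in absolute value by `W`, and every state has an outgoing edge. -/
structure Game (S : Type*) where
  S0 : Set S
  S1 : Set S
  E : Set (WEdge S)
  W : ℕ
  disj : Disjoint S0 S1
  cover : S0 ∪ S1 = Set.univ
  wbound : ∀ e ∈ E, -(W : ℤ) ≤ e.2.1 ∧ e.2.1 ≤ (W : ℤ)
  total : ∀ s : S, ∃ w s', (s, w, s') ∈ E

variable {α : Type*}

/-- A play from `s`: an infinite sequence of consecutive edges of `E` starting at `s`. -/
def IsPlay (E : Set (WEdge α)) (s : α) (π : ℕ → WEdge α) : Prop :=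
  (∀ i, π i ∈ E) ∧ (π 0).1 = s ∧ ∀ i, (π i).2.2 = (π (i + 1)).1

/-- Energy level of the length-`n` prefix of `π`. -/
def EL (π : ℕ → WEdge α) (n : ℕ) : ℤ :=
  ∑ i ∈ Finset.range n, (π i).2.1

/-- Mean-payoff of the length-`n` prefix of `π`. -/
def MP (π : ℕ → WEdge α) (n : ℕ) : ℚ := (EL π n : ℚ) / n

/-- Average-energy of the length-`n` prefix of `π`. -/
def AE (π : ℕ → WEdge α) (n : ℕ) : ℚ :=
  (∑ i ∈ Finset.range n, (EL π (i + 1) : ℚ)) / n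

/-- `limsup_{n → ∞} f n ≤ t` (ε-characterization, valid in `ℚ`). -/
def LimsupLE (f : ℕ → ℚ) (t : ℚ) : Prop :=
  ∀ ε : ℚ, 0 < ε → ∃ N, ∀ n ≥ N, f n ≤ t + ε

/-- The state reached after following the finite prefix `ρ` from `s`. -/
def EndSt (s : α) (ρ : List (WEdge α)) : α :=
  (ρ.getLast?.map (fun e => e.2.2)).getD s

/-- `ρ` is a finite play prefix from `s` in the graph with edge set `E`. -/
def IsPrefixFrom (E : Set (WEdge α)) (s : α) (ρ : List (WEdge α)) : Prop :=
  (∀ e ∈ ρ, e ∈ E) ∧ List.Chain' (fun e f => e.2.2 = f.1) ρ ∧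
    ∀ e, ρ.head? = some e → e.1 = s

/-- A strategy (of the player owning the states in `S0`) from `s`: it assigns to every
play prefix from `s` ending in a state of `S0` a valid outgoing edge. -/
def IsStrategy (E : Set (WEdge α)) (S0 : Set α) (s : α)
    (σ : List (WEdge α) → WEdge α) : Prop :=
  ∀ ρ, IsPrefixFrom E s ρ → EndSt s ρ ∈ S0 → σ ρ ∈ E ∧ (σ ρ).1 = EndSt s ρ

/-- The length-`n` prefix of a play, as a list of edges. -/
def Pref (π : ℕ → WEdge α) (n : ℕ) : List (WEdge α) :=
  List.ofFn (fun i : Fin n => π i)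

/-- `π` is an outcome of the strategy `σ` (for the player owning `S0`) from `s`. -/
def IsOutcome (E : Set (WEdge α)) (S0 : Set α) (s : α)
    (σ : List (WEdge α) → WEdge α) (π : ℕ → WEdge α) : Prop :=
  IsPlay E s π ∧ ∀ n, EndSt s (Pref π n) ∈ S0 → π n = σ (Pref π n)

/-- Configurations of the expanded game: `⊥` is `none`. -/
abbrev Conf (S : Type*) := Option (S × ℕ)

/-- Edges of the expanded infinite-state weighted game `G'`:
`((s,c), c', (s',c'))` whenever `(s,w,s') ∈ E` and `c' = c + w ≥ 0`;
`((s,c), ⌈t⌉+1, ⊥)` whenever some `(s,w,s') ∈ E` has `c + w < 0`; and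
`(⊥, ⌈t⌉+1, ⊥)`. -/
def ExpE {S : Type*} (G : Game S) (t : ℚ) : Set (WEdge (Conf S)) :=
  {e | (∃ (s : S) (c : ℕ) (w : ℤ) (s' : S) (c' : ℕ), (s, w, s') ∈ G.E ∧ (c : ℤ) + w = (c' : ℤ) ∧
          e = (some (s, c), (c' : ℤ), some (s', c'))) ∨
       (∃ (s : S) (c : ℕ) (w : ℤ) (s' : S), (s, w, s') ∈ G.E ∧ (c : ℤ) + w < 0 ∧
          e = (some (s, c), ⌈t⌉ + 1, (none : Conf S))) ∨
       e = ((none : Conf S), ⌈t⌉ + 1, (none : Conf S))}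

/-- The configurations of the expanded game belonging to player `P₀`. -/
def ExpS0 {S : Type*} (G : Game S) : Set (Conf S) :=
  {γ | ∃ s c, s ∈ G.S0 ∧ γ = some (s, c)}

/-- The state (configuration) visited at position `n` along a play from `s`:
`γ₀ = s` and `γ_{n+1}` is the target of the `(n+1)`-st edge. -/
def StAt (s : α) (π : ℕ → WEdge α) : ℕ → α
  | 0 => s
  | n + 1 => (π n).2.2

end AvgEnergy

/-!
The play never reaches `⊥`: from there on every weight is `⌈t⌉ + 1 > t`, which would push the
mean-payoff above `t`. So the `k`-th weight is the counter `c (k + 1)`, and the potential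
`Φ n = t.den * ∑_{i < n} (c (i + 1) - t)` is sublinear. If there were no good cycle, `Φ` would
gain at least `1` on every step into a configuration with counter above `t`, lose at most
`t.den * t` on any other step, and gain at least `1` along every cycle at a configuration with
counter at most `t`. The last property bounds the number of visits to each of the finitely many
such configurations by `ε n + O(1)`, whence `Φ n ≥ n - O(ε n) - O(1)`, contradicting sublinearity.
-/

namespace AvgEnergy

open Finset

variable {α S : Type*}

theorem one_le_den_mul_sub_of_mul_lt {t : ℚ} {m L : ℕ} (h : t * L < m) :
    1 ≤ (t.den : ℚ) * (m - t * L) := by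
  have hz : (t.den : ℚ) * (m - t * L) = ((t.den * m - t.num * L : ℤ) : ℚ) := by
    push_cast
    rw [← Rat.mul_den_eq_num]
    ring
  have hpos : 0 < (t.den : ℚ) * (m - t * L) := mul_pos (by positivity) (by linarith)
  rw [hz] at hpos ⊢
  exact_mod_cast (Int.cast_pos.mp hpos : 0 < t.den * (m : ℤ) - t.num * L)

theorem exists_forall_le_add_of_eventually_le {f g : ℕ → ℚ} (h : ∃ N, ∀ n ≥ N, f n ≤ g n) :
    ∃ B, ∀ n, f n ≤ g n + B := by
  obtain ⟨N, hN⟩ := h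
  refine ⟨∑ m ∈ range N, |f m - g m|, fun n => ?_⟩
  have hB : 0 ≤ ∑ m ∈ range N, |f m - g m| := sum_nonneg fun _ _ => abs_nonneg _
  rcases lt_or_ge n N with hn | hn
  · have := single_le_sum (fun m _ => abs_nonneg (f m - g m)) (mem_range.mpr hn)
    linarith [le_abs_self (f n - g n)]
  · linarith [hN n hn]

section CycleGain

variable {γ : Type*} [DecidableEq γ] (x : ℕ → γ) (T : Finset γ) (Φ : ℕ → ℚ)

theorem count_sub_count_le_of_cycle_gain
    (hcycle : ∀ a b, a < b → x a = x b → x a ∈ T → Φ a + 1 ≤ Φ b)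
    {a : ℕ} (ha : x a ∈ T) {n : ℕ} (hn : a ≤ n) :
    (Nat.count (fun k => x (k + 1) = x a) n : ℚ) - Nat.count (fun k => x (k + 1) = x a) a
      ≤ Φ (Nat.findGreatest (fun m => x m = x a) n) - Φ a := by
  induction n, hn using Nat.le_induction with
  | base => simp
  | succ n han ih =>
    rw [Nat.count_succ]
    by_cases hvisit : x (n + 1) = x a
    · have hlast : x (Nat.findGreatest (fun m => x m = x a) n) = x a :=
        Nat.findGreatest_spec (P := fun m => x m = x a) han rfl
      have hgain := hcycle _ (n + 1) (Nat.lt_succ_of_le (Nat.findGreatest_le n))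
        (hlast.trans hvisit.symm) (by rwa [hlast])
      rw [Nat.findGreatest_eq hvisit, if_pos hvisit]
      push_cast
      linarith
    · rw [Nat.findGreatest_of_not hvisit, if_neg hvisit]
      simpa using ih

theorem add_sub_mul_sum_count_le {p : ℚ}
    (hhigh : ∀ k, x (k + 1) ∉ T → Φ k + 1 ≤ Φ (k + 1)) (hlow : ∀ k, Φ k - p ≤ Φ (k + 1))
    (n : ℕ) :
    Φ 0 + n - (p + 1) * ∑ y ∈ T, (Nat.count (fun k => x (k + 1) = y) n : ℚ) ≤ Φ n := by
  induction n with
  | zero => simp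
  | succ n ih =>
    simp only [Nat.count_succ, Nat.cast_add, sum_add_distrib, Nat.cast_ite,
      Nat.cast_zero, sum_ite_eq, Nat.cast_succ]
    by_cases hT : x (n + 1) ∈ T
    · rw [if_pos hT]
      linarith [hlow n]
    · rw [if_neg hT]
      linarith [hhigh n hT]

theorem exists_count_le_of_cycle_gain
    (hcycle : ∀ a b, a < b → x a = x b → x a ∈ T → Φ a + 1 ≤ Φ b)
    {ε B : ℚ} (hε : 0 ≤ ε) (hB : ∀ m, Φ m ≤ ε * m + B) {y : γ} (hy : y ∈ T) :
    ∃ C, ∀ n, (Nat.count (fun k => x (k + 1) = y) n : ℚ) ≤ ε * n + C := by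
  by_cases hvisited : ∃ a, x a = y
  · obtain ⟨a, rfl⟩ := hvisited
    refine ⟨a + ε * a + B - Φ a, fun n => ?_⟩
    have hcount_a : (Nat.count (fun k => x (k + 1) = x a) a : ℚ) ≤ a := by
      exact_mod_cast Nat.count_le _
    have hΦa := hB a
    rcases le_or_gt a n with han | hna
    · have hchain := count_sub_count_le_of_cycle_gain x T Φ hcycle hy han
      have hlast := hB (Nat.findGreatest (fun m => x m = x a) n)
      have hle : (Nat.findGreatest (fun m => x m = x a) n : ℚ) ≤ n := by
        exact_mod_cast Nat.findGreatest_le n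
      nlinarith
    · have hmono : (Nat.count (fun k => x (k + 1) = x a) n : ℚ)
          ≤ Nat.count (fun k => x (k + 1) = x a) a := by
        exact_mod_cast Nat.count_monotone _ hna.le
      have : (0 : ℚ) ≤ ε * n := by positivity
      linarith
  · refine ⟨0, fun n => ?_⟩
    push Not at hvisited
    rw [Nat.count_of_forall_not (fun k _ => hvisited (k + 1))]
    simp only [Nat.cast_zero, add_zero]
    positivity

theorem not_sublinear_of_cycle_gain {p : ℚ} (hp : 0 ≤ p)
    (hhigh : ∀ k, x (k + 1) ∉ T → Φ k + 1 ≤ Φ (k + 1)) (hlow : ∀ k, Φ k - p ≤ Φ (k + 1))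
    (hcycle : ∀ a b, a < b → x a = x b → x a ∈ T → Φ a + 1 ≤ Φ b) :
    ¬ ∀ ε > 0, ∃ N, ∀ n ≥ N, Φ n ≤ ε * n := by
  intro hsub
  set ε : ℚ := 1 / (2 * ((p + 1) * #T + 1)) with hε
  have hεpos : 0 < ε := by positivity
  obtain ⟨B, hB⟩ := exists_forall_le_add_of_eventually_le (hsub ε hεpos)
  choose! C hC using fun y (hy : y ∈ T) =>
    exists_count_le_of_cycle_gain x T Φ hcycle hεpos.le hB hy
  have htotal : ∀ n, ∑ y ∈ T, (Nat.count (fun k => x (k + 1) = y) n : ℚ)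
      ≤ #T * ε * n + ∑ y ∈ T, C y := by
    intro n
    calc _ ≤ ∑ y ∈ T, (ε * n + C y) := sum_le_sum fun y hy => hC y hy n
      _ = _ := by rw [sum_add_distrib, sum_const, nsmul_eq_mul]; ring
  obtain ⟨n, hn⟩ := exists_nat_gt (2 * ((p + 1) * ∑ y ∈ T, C y + B - Φ 0))
  have hlower := add_sub_mul_sum_count_le x T Φ hhigh hlow n
  have hupper := hB n
  have hcount := mul_le_mul_of_nonneg_left (htotal n) (by linarith : 0 ≤ p + 1)
  have hεid : ((p + 1) * #T + 1) * ε = 1 / 2 := by rw [hε]; field_simp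
  nlinarith

end CycleGain

theorem exists_good_cycle {γ : Type*} (x : ℕ → γ) (w : γ → ℕ) {t : ℚ} (ht : 0 ≤ t)
    (hfin : {y | (w y : ℚ) ≤ t}.Finite)
    (hmp : ∀ ε > 0, ∃ N, ∀ n ≥ N, ∑ i ∈ range n, (w (x (i + 1)) : ℚ) ≤ (t + ε) * n) :
    ∃ a b, a < b ∧ x a = x b ∧ (w (x a) : ℚ) ≤ t ∧
      ∑ i ∈ Ico a b, (w (x (i + 1)) : ℚ) ≤ t * ((b : ℚ) - a) := by
  classical
  by_contra! hbad
  -- scaled by `t.den`, the increments of `Φ` are integers, so positive ones are at least `1`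
  set Φ : ℕ → ℚ := fun n => t.den * ∑ i ∈ range n, ((w (x (i + 1)) : ℚ) - t) with hΦ
  have hΦ_sub : ∀ a b, a ≤ b →
      Φ b - Φ a = t.den * (((∑ i ∈ Ico a b, w (x (i + 1)) : ℕ) : ℚ) - t * ((b - a : ℕ) : ℚ)) := by
    intro a b hab
    rw [hΦ, ← mul_sub, ← sum_Ico_eq_sub _ hab, sum_sub_distrib, sum_const, Nat.card_Ico,
      nsmul_eq_mul, Nat.cast_sum]
    ring
  have hstep : ∀ k, Φ (k + 1) - Φ k = t.den * ((w (x (k + 1)) : ℚ) - t * ((1 : ℕ) : ℚ)) := by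
    intro k
    rw [hΦ_sub k (k + 1) k.le_succ]
    simp
  refine not_sublinear_of_cycle_gain x hfin.toFinset Φ (p := t.den * t) (by positivity)
    (fun k hk => ?_) (fun k => ?_) (fun a b hab hx hlow => ?_) (fun ε hε => ?_)
  · rw [Set.Finite.mem_toFinset, Set.mem_ofPred_eq, not_le] at hk
    linarith [hstep k, one_le_den_mul_sub_of_mul_lt (L := 1) (by simpa using hk)]
  · have hk := hstep k
    have : (0 : ℚ) ≤ t.den * w (x (k + 1)) := by positivity
    rw [Nat.cast_one, mul_one] at hk
    linarith
  · rw [Set.Finite.mem_toFinset, Set.mem_ofPred_eq] at hlow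
    have hgap := one_le_den_mul_sub_of_mul_lt (t := t) (m := ∑ i ∈ Ico a b, w (x (i + 1)))
      (L := b - a) (by push_cast [Nat.cast_sub hab.le]; exact hbad a b hab hx hlow)
    linarith [hΦ_sub a b hab.le]
  · obtain ⟨N, hN⟩ := hmp (ε / t.den) (by positivity)
    refine ⟨N, fun n hn => ?_⟩
    have hden : (0 : ℚ) < t.den := by positivity
    calc Φ n = t.den * (∑ i ∈ range n, (w (x (i + 1)) : ℚ) - t * n) := by
          simp only [hΦ, sum_sub_distrib, sum_const, card_range, nsmul_eq_mul]
          ring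
      _ ≤ t.den * ((t + ε / t.den) * n - t * n) := by gcongr; exact hN n hn
      _ = ε * n := by field_simp; ring

theorem IsPlay.fst_eq_stAt {E : Set (WEdge α)} {s : α} {π : ℕ → WEdge α} (h : IsPlay E s π)
    (k : ℕ) : (π k).1 = StAt s π k := by
  cases k with
  | zero => exact h.2.1
  | succ k => exact (h.2.2 k).symm

theorem eq_of_mem_expE_of_fst_eq_none {G : Game S} {t : ℚ} {e : WEdge (Conf S)}
    (he : e ∈ ExpE G t) (h : e.1 = none) : e = (none, ⌈t⌉ + 1, none) := by
  rcases he with ⟨s, c, w, s', c', -, -, rfl⟩ | ⟨s, c, w, s', -, -, rfl⟩ | rfl <;> simp_all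

theorem weight_eq_of_mem_expE {G : Game S} {t : ℚ} {e : WEdge (Conf S)} (he : e ∈ ExpE G t)
    {y : S × ℕ} (h : e.2.2 = some y) : e.2.1 = y.2 := by
  rcases he with ⟨s, c, w, s', c', -, -, rfl⟩ | ⟨s, c, w, s', -, -, rfl⟩ | rfl
  · obtain rfl := Option.some_injective _ h
    rfl
  all_goals simp at h

theorem LimsupLE.exists_EL_le {π : ℕ → WEdge α} {t : ℚ} (h : LimsupLE (MP π) t) :
    ∀ ε > 0, ∃ N, ∀ n ≥ N, (EL π n : ℚ) ≤ (t + ε) * n := by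
  intro ε hε
  obtain ⟨N, hN⟩ := h ε hε
  refine ⟨N, fun n hn => ?_⟩
  rcases n.eq_zero_or_pos with rfl | hpos
  · simp [EL]
  · exact (div_le_iff₀ (by exact_mod_cast hpos)).mp (hN n hn)

theorem not_limsupLE_MP_of_le_weight {π : ℕ → WEdge α} {t : ℚ} {u : ℤ} (htu : t < u) {k₀ : ℕ}
    (h : ∀ i ≥ k₀, u ≤ (π i).2.1) : ¬ LimsupLE (MP π) t := by
  intro hmp
  obtain ⟨N, hN⟩ := hmp.exists_EL_le ((u - t) / 2) (by linarith)
  obtain ⟨n, hn⟩ := exists_nat_gt (max (max (N : ℚ) k₀) (2 * (k₀ * u - EL π k₀) / (u - t)))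
  have hnN : N ≤ n := by exact_mod_cast (le_max_left _ _ |>.trans (le_max_left _ _)).trans hn.le
  have hnk : k₀ ≤ n := by exact_mod_cast (le_max_right _ _ |>.trans (le_max_left _ _)).trans hn.le
  have htail : ((n - k₀ : ℕ) : ℤ) * u ≤ EL π n - EL π k₀ := by
    rw [EL, EL, ← sum_range_add_sum_Ico _ hnk, add_sub_cancel_left, ← Nat.card_Ico, ← nsmul_eq_mul]
    exact card_nsmul_le_sum _ _ _ fun i hi => h i (mem_Ico.mp hi).1
  have htailQ : ((n : ℚ) - k₀) * u ≤ EL π n - EL π k₀ := by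
    rw [← Nat.cast_sub hnk]; exact_mod_cast htail
  have hbig : 2 * (k₀ * u - EL π k₀) / (u - t) < n := (le_max_right _ _).trans_lt hn
  rw [div_lt_iff₀ (by linarith)] at hbig
  nlinarith [hN n hnN]

theorem IsPlay.stAt_ne_none {G : Game S} {t : ℚ} {s : Conf S} {π : ℕ → WEdge (Conf S)}
    (hplay : IsPlay (ExpE G t) s π) (hmp : LimsupLE (MP π) t) (k : ℕ) : StAt s π k ≠ none := by
  intro hk
  have hsink : ∀ j, StAt s π (k + j) = none ∧ π (k + j) = (none, ⌈t⌉ + 1, none) := by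
    intro j
    induction j with
    | zero =>
      exact ⟨hk, eq_of_mem_expE_of_fst_eq_none (hplay.1 k) ((hplay.fst_eq_stAt k).trans hk)⟩
    | succ j ih =>
      have hnext : StAt s π (k + (j + 1)) = none := by
        change (π (k + j)).2.2 = none
        rw [ih.2]
      exact ⟨hnext, eq_of_mem_expE_of_fst_eq_none (hplay.1 _) ((hplay.fst_eq_stAt _).trans hnext)⟩
  refine not_limsupLE_MP_of_le_weight (u := ⌈t⌉ + 1) (k₀ := k) ?_ (fun i hi => ?_) hmp
  · push_cast
    linarith [Int.le_ceil t]
  · obtain ⟨j, rfl⟩ := Nat.exists_eq_add_of_le hi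
    rw [(hsink j).2]

/-- Let `π` be a play of the expanded game `G'` from `(s_init, 0)` with
`MPsup(π) ≤ t`, and let `(γ_i)_{i≥0}` be its configuration sequence. Then there exist
`1 ≤ i ≤ j` such that `π_{[i,j]}` is a good cycle: writing `γ_k = (s_k, c_k)` for
`i−1 ≤ k ≤ j`, we have `γ_{i−1} = γ_j`, `c_{i−1} ≤ t`, and
`(1/(j−i+1)) Σ_{k=i}^j c_k ≤ t`. -/
theorem statement5 {S : Type} [Fintype S] (G : Game S) (sinit : S) (t : ℚ) (ht : 0 ≤ t)
    (π : ℕ → WEdge (Conf S))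
    (hplay : IsPlay (ExpE G t) (some (sinit, 0)) π)
    (hmp : LimsupLE (MP π) t) :
    ∃ i j, 1 ≤ i ∧ i ≤ j ∧
      ∃ cfg : ℕ → S × ℕ,
        (∀ k, i - 1 ≤ k → k ≤ j → StAt (some (sinit, 0)) π k = some (cfg k)) ∧
        cfg (i - 1) = cfg j ∧
        ((cfg (i - 1)).2 : ℚ) ≤ t ∧
        (∑ k ∈ Finset.Icc i j, ((cfg k).2 : ℚ)) / ((j - i + 1 : ℕ) : ℚ) ≤ t := by
  choose cfg hcfg using fun k => Option.ne_none_iff_exists'.mp (hplay.stAt_ne_none hmp k)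
  have hweight : ∀ i, (π i).2.1 = (cfg (i + 1)).2 :=
    fun i => weight_eq_of_mem_expE (hplay.1 i) (hcfg (i + 1))
  have hfin : {y : S × ℕ | (y.2 : ℚ) ≤ t}.Finite :=
    (Set.finite_univ.prod (Set.finite_Iic ⌊t⌋₊)).subset fun y hy => ⟨trivial, Nat.le_floor hy⟩
  have hmp' : ∀ ε > 0, ∃ N, ∀ n ≥ N, ∑ i ∈ range n, ((cfg (i + 1)).2 : ℚ) ≤ (t + ε) * n := by
    intro ε hε
    obtain ⟨N, hN⟩ := hmp.exists_EL_le ε hε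
    refine ⟨N, fun n hn => ?_⟩
    simpa [EL, hweight] using hN n hn
  obtain ⟨a, b, hab, hcycle, hlow, hmean⟩ := exists_good_cycle cfg Prod.snd ht hfin hmp'
  refine ⟨a + 1, b, Nat.le_add_left 1 a, hab, cfg,
    fun k _ _ => hcfg k, by simpa using hcycle, by simpa using hlow, ?_⟩
  rw [← Ico_add_one_right_eq_Icc, ← sum_Ico_add', show b - (a + 1) + 1 = b - a by omega,
    Nat.cast_sub hab.le, div_le_iff₀ (by simpa using hab)]
  exact hmean

end AvgEnergy
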